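/- Let d ≥ 2, L > 0, γ ∈ (0,1], and a = (a₁,…,a_d) ∈ ℝ₊^d with a_j ≤ 2πL for j = 1,…,d−1, and let S ⊆ ℝ^d be a (γ,a)-thick set. Define S^{(0)} := S ∩ Ω_L and, for i = 1,…,d−1, S^{(i)} := S^{(i−1)} ∪ σ_i(S^{(i−1)}), where σ_i : ℝ^d → ℝ^d changes the sign of the i-th coordinate and fixes all other coordinates. Finally, set S̃ := ∪_{κ ∈ (4πLℤ)^{d−1} × {0}} (κ + S^{(d−1)}). Then S̃ is (γ/2^d, 2a)-thick in ℝ^d, where 2a = (2a₁,…,2a_d). -/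

import Mathlib

open MeasureTheory

/-- The infinite strip `Ω_L = (0,2πL)^{d-1} × ℝ ⊆ ℝ^d`. -/
def OmegaL (d : ℕ) (L : ℝ) : Set (Fin d → ℝ) :=
  {x | ∀ j : Fin d, (j : ℕ) < d - 1 → x j ∈ Set.Ioo 0 (2 * Real.pi * L)}

/-- A measurable set `S ⊆ ℝ^d` is `(γ,a)`-thick. -/
def IsThick {d : ℕ} (γ : ℝ) (a : Fin d → ℝ) (S : Set (Fin d → ℝ)) : Prop :=
  ∀ c : Fin d → ℝ,
    ENNReal.ofReal γ * volume (Set.univ.pi fun j => Set.Ioo (c j) (c j + a j)) ≤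
      volume (S ∩ Set.univ.pi fun j => Set.Ioo (c j) (c j + a j))

/-- Iterated reflections: `SRefl d L S 0 = S ∩ Ω_L` and
`SRefl d L S i = SRefl d L S (i-1) ∪ σ_i (SRefl d L S (i-1))`, where `σ_i` changes the sign
of the `i`-th coordinate. -/
def SRefl (d : ℕ) (L : ℝ) (S : Set (Fin d → ℝ)) : ℕ → Set (Fin d → ℝ)
  | 0 => S ∩ OmegaL d L
  | i + 1 =>
      SRefl d L S i ∪
        (if h : i < d then
          (fun x : Fin d → ℝ => Function.update x (⟨i, h⟩ : Fin d) (-(x ⟨i, h⟩))) ''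
            SRefl d L S i
        else SRefl d L S i)

/-!
A box `Q` with side lengths `2a` contains, in each of the first `d - 1` coordinates, an interval
of length `a` inside a single cell `[2πLk, 2πL(k + 1)]`. A translation by the lattice
`(4πLℤ)^{d-1} × {0}`, composed with the reflections in the coordinates where `k` is odd, is an
affine isometry `ψ` carrying this sub-box onto a box `P` of side lengths `a` whose first `d - 1`
sides lie in `(0, 2πL)`. If `ψ x ∈ S ∩ P`, then folding `x` minus the lattice vector gives
`ψ x ∈ S ∩ Ω_L`, so `x ∈ S̃`; hence `|S̃ ∩ Q| ≥ |S ∩ P| ≥ γ|P| = γ 2^{-d} |Q|`.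
-/

open Set

def absBelow {d : ℕ} (i : ℕ) (z : Fin d → ℝ) : Fin d → ℝ :=
  fun j => if (j : ℕ) < i then |z j| else z j

lemma absBelow_zero {d : ℕ} (z : Fin d → ℝ) : absBelow 0 z = z := by
  funext j; simp [absBelow]

lemma absBelow_succ {d i : ℕ} (hi : i < d) (z : Fin d → ℝ) :
    absBelow (i + 1) z = absBelow i (Function.update z ⟨i, hi⟩ |z ⟨i, hi⟩|) := by
  funext j
  rcases lt_trichotomy (j : ℕ) i with h | h | h
  · have hj : j ≠ ⟨i, hi⟩ := fun hj => by simp [hj] at h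
    simp [absBelow, h, Nat.lt_succ_of_lt h, hj]
  · obtain rfl : j = ⟨i, hi⟩ := Fin.ext h
    simp [absBelow]
  · have hj : j ≠ ⟨i, hi⟩ := fun hj => by simp [hj] at h
    simp [absBelow, hj, h.not_gt, (Nat.succ_le_of_lt h).not_gt]

lemma mem_SRefl_succ_of_update_abs_mem {d : ℕ} {L : ℝ} {S : Set (Fin d → ℝ)} {i : ℕ}
    (hi : i < d) {z : Fin d → ℝ}
    (hz : Function.update z ⟨i, hi⟩ |z ⟨i, hi⟩| ∈ SRefl d L S i) : z ∈ SRefl d L S (i + 1) := by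
  simp only [SRefl, dif_pos hi]
  rcases abs_choice (z ⟨i, hi⟩) with h | h
  · left
    rwa [h, Function.update_eq_self] at hz
  · right
    rw [h] at hz
    exact ⟨_, hz, by simp⟩

lemma mem_SRefl_of_absBelow_mem {d : ℕ} {L : ℝ} {S : Set (Fin d → ℝ)} :
    ∀ {i : ℕ}, i ≤ d → ∀ {z : Fin d → ℝ}, absBelow i z ∈ S ∩ OmegaL d L → z ∈ SRefl d L S i
  | 0, _, z, hz => by rwa [absBelow_zero] at hz
  | i + 1, hi, z, hz => by
    have hid : i < d := hi
    rw [absBelow_succ hid] at hz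
    exact mem_SRefl_succ_of_update_abs_mem hid (mem_SRefl_of_absBelow_mem hid.le hz)

lemma exists_Ioo_subset_cell {T a : ℝ} (hT : 0 < T) (ha : 0 ≤ a) (haT : a ≤ T) (c : ℝ) :
    ∃ (k : ℤ) (e : ℝ), c ≤ e ∧ e + a ≤ c + 2 * a ∧ T * k ≤ e ∧ e + a ≤ T * (k + 1) := by
  set k := ⌊c / T⌋
  have hk : T * k ≤ c := by
    rw [mul_comm, ← le_div_iff₀ hT]; exact Int.floor_le _
  have hk' : c < T * (k + 1) := by
    rw [mul_comm, ← div_lt_iff₀ hT]; exact Int.lt_floor_add_one _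
  by_cases hc : c + a ≤ T * (k + 1)
  · exact ⟨k, c, le_rfl, by linarith, hk, hc⟩
  · refine ⟨k + 1, T * (k + 1), hk'.le, by linarith, by push_cast; rfl, ?_⟩
    push_cast; linarith

lemma exists_fold_preimage_subset_Ioo {T a : ℝ} (hT : 0 < T) (ha : 0 ≤ a) (haT : a ≤ T)
    (c : ℝ) : ∃ ε b u : ℝ, (ε = 1 ∨ ε = -1) ∧ (∃ m : ℤ, b = m * (2 * T)) ∧ 0 ≤ u ∧
      u + a ≤ T ∧ ∀ t, ε * (t - b) ∈ Ioo u (u + a) → t ∈ Ioo c (c + 2 * a) := by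
  obtain ⟨k, e, hce, hec, hke, hek⟩ := exists_Ioo_subset_cell hT ha haT c
  rcases Int.even_or_odd' k with ⟨m, rfl | rfl⟩
  · refine ⟨1, T * (2 * m), e - T * (2 * m), .inl rfl, ⟨m, by ring⟩, ?_, ?_, ?_⟩
    · push_cast at hke; linarith
    · push_cast at hek; linarith
    · rintro t ⟨h₁, h₂⟩; constructor <;> linarith
  · refine ⟨-1, T * (2 * m + 2), T * (2 * m + 2) - e - a, .inr rfl, ⟨m + 1, by push_cast; ring⟩,
      ?_, ?_, ?_⟩
    · push_cast at hek; linarith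
    · push_cast at hke; linarith
    · rintro t ⟨h₁, h₂⟩; constructor <;> linarith

lemma measurePreserving_sign_mul_sub {ε : ℝ} (hε : ε = 1 ∨ ε = -1) (b : ℝ) :
    MeasurePreserving (fun t : ℝ => ε * (t - b)) := by
  rcases hε with rfl | rfl
  · simpa using measurePreserving_sub_right volume b
  · simpa using Measure.measurePreserving_sub_left volume b

lemma volume_pi_Ioo_add {d : ℕ} (c a : Fin d → ℝ) :
    volume (univ.pi fun j => Ioo (c j) (c j + a j)) = ∏ j, ENNReal.ofReal (a j) := by
  simp [volume_pi_pi, Real.volume_Ioo]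

lemma ofReal_div_two_pow_mul_prod {d : ℕ} (γ : ℝ) (a : Fin d → ℝ) :
    ENNReal.ofReal (γ / 2 ^ d) * ∏ j, ENNReal.ofReal (2 * a j) =
      ENNReal.ofReal γ * ∏ j, ENNReal.ofReal (a j) := by
  simp_rw [ENNReal.ofReal_mul zero_le_two, Finset.prod_mul_distrib, Finset.prod_const,
    Finset.card_univ, Fintype.card_fin, ← mul_assoc,
    ENNReal.ofReal_div_of_pos (pow_pos two_pos d)]
  congr 1
  rw [ENNReal.ofReal_pow zero_le_two, ENNReal.div_mul_cancel] <;> simp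

lemma IsThick.of_preimage_subset {d : ℕ} {γ : ℝ} {a : Fin d → ℝ} {S S' : Set (Fin d → ℝ)}
    (hSm : MeasurableSet S) (hS : IsThick γ a S)
    (h : ∀ c : Fin d → ℝ, ∃ (ψ : (Fin d → ℝ) → Fin d → ℝ) (u : Fin d → ℝ),
      MeasurePreserving ψ ∧
      ψ ⁻¹' (S ∩ univ.pi fun j => Ioo (u j) (u j + a j)) ⊆
        S' ∩ univ.pi fun j => Ioo (c j) (c j + 2 * a j)) :
    IsThick (γ / 2 ^ d) (fun j => 2 * a j) S' := by
  intro c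
  obtain ⟨ψ, u, hψ, hsub⟩ := h c
  have hm : MeasurableSet (S ∩ univ.pi fun j => Ioo (u j) (u j + a j)) :=
    hSm.inter (.univ_pi fun _ => measurableSet_Ioo)
  calc ENNReal.ofReal (γ / 2 ^ d) * volume (univ.pi fun j => Ioo (c j) (c j + 2 * a j))
      = ENNReal.ofReal γ * volume (univ.pi fun j => Ioo (u j) (u j + a j)) := by
        rw [volume_pi_Ioo_add, volume_pi_Ioo_add, ofReal_div_two_pow_mul_prod]
    _ ≤ volume (S ∩ univ.pi fun j => Ioo (u j) (u j + a j)) := hS u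
    _ = volume (ψ ⁻¹' (S ∩ univ.pi fun j => Ioo (u j) (u j + a j))) :=
        (hψ.measure_preimage hm.nullMeasurableSet).symm
    _ ≤ _ := measure_mono hsub

lemma exists_coord_fold {d : ℕ} {L : ℝ} (hL : 0 < L) {a : Fin d → ℝ} (ha : ∀ j, 0 < a j)
    (haL : ∀ j : Fin d, (j : ℕ) < d - 1 → a j ≤ 2 * Real.pi * L) (c : Fin d → ℝ) (j : Fin d) :
    ∃ ε b u : ℝ, (ε = 1 ∨ ε = -1) ∧
      (∀ t, ε * (t - b) ∈ Ioo u (u + a j) → t ∈ Ioo (c j) (c j + 2 * a j)) ∧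
      ((j : ℕ) < d - 1 → (∃ m : ℤ, b = m * (4 * Real.pi * L)) ∧ 0 ≤ u ∧
        u + a j ≤ 2 * Real.pi * L) ∧
      (¬(j : ℕ) < d - 1 → ε = 1 ∧ b = 0) := by
  by_cases hj : (j : ℕ) < d - 1
  · obtain ⟨ε, b, u, hε, ⟨m, hm⟩, hu, hua, hsub⟩ :=
      exists_fold_preimage_subset_Ioo (by positivity) (ha j).le (haL j hj) (c j)
    exact ⟨ε, b, u, hε, hsub, fun _ => ⟨⟨m, by rw [hm]; ring⟩, hu, hua⟩, absurd hj⟩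
  · refine ⟨1, 0, c j, .inl rfl, ?_, fun h => absurd h hj, fun _ => ⟨rfl, rfl⟩⟩
    rintro t ⟨h₁, h₂⟩
    simp only [sub_zero, one_mul] at h₁ h₂
    exact ⟨h₁, by linarith [ha j]⟩

theorem stmt_14_general (d : ℕ) (L γ : ℝ) (hL : 0 < L)
    (a : Fin d → ℝ) (ha : ∀ j, 0 < a j)
    (haL : ∀ j : Fin d, (j : ℕ) < d - 1 → a j ≤ 2 * Real.pi * L)
    (S : Set (Fin d → ℝ)) (hSm : MeasurableSet S) (hthick : IsThick γ a S) :
    IsThick (γ / 2 ^ d) (fun j => 2 * a j)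
      (⋃ κ ∈ {κ : Fin d → ℝ |
          (∀ j : Fin d, (j : ℕ) < d - 1 → ∃ m : ℤ, κ j = m * (4 * Real.pi * L)) ∧
          (∀ j : Fin d, ¬((j : ℕ) < d - 1) → κ j = 0)},
        (fun x => κ + x) '' SRefl d L S (d - 1)) := by
  refine hthick.of_preimage_subset hSm fun c => ?_
  choose ε b u hε hsub hper hlast using exists_coord_fold hL ha haL c
  refine ⟨fun x j => ε j * (x j - b j), u,
    volume_preserving_pi fun j => measurePreserving_sign_mul_sub (hε j) (b j), ?_⟩
  rintro x ⟨hxS, hxu⟩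
  rw [mem_univ_pi] at hxu
  have hfold : absBelow (d - 1) (x - b) = fun j => ε j * (x j - b j) := by
    funext j
    by_cases hj : (j : ℕ) < d - 1
    · have hpos : 0 < ε j * (x j - b j) := (hper j hj).2.1.trans_lt (hxu j).1
      have hε_abs : |ε j| = 1 := by rcases hε j with h | h <;> simp [h]
      simp only [absBelow, if_pos hj, Pi.sub_apply]
      rw [← one_mul |x j - b j|, ← hε_abs, ← abs_mul, abs_of_pos hpos]
    · simp [absBelow, hj, hlast j hj]
  refine ⟨mem_iUnion₂.2 ⟨b, ⟨fun j hj => (hper j hj).1, fun j hj => (hlast j hj).2⟩,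
    x - b, mem_SRefl_of_absBelow_mem (Nat.sub_le d 1) ?_, add_sub_cancel _ _⟩,
    mem_univ_pi.2 fun j => hsub j _ (hxu j)⟩
  rw [hfold]
  exact ⟨hxS, fun j hj => ⟨(hper j hj).2.1.trans_lt (hxu j).1, (hxu j).2.trans_le (hper j hj).2.2⟩⟩

/-- the periodic extension (with period lattice `(4πLℤ)^{d-1} × {0}`) of the
iterated reflection `S^{(d-1)}` of `S ∩ Ω_L` is `(γ/2^d, 2a)`-thick in `ℝ^d`. -/
theorem stmt_14 (d : ℕ) (hd : 2 ≤ d) (L γ : ℝ) (hL : 0 < L) (hγ0 : 0 < γ) (hγ1 : γ ≤ 1)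
    (a : Fin d → ℝ) (ha : ∀ j, 0 < a j)
    (haL : ∀ j : Fin d, (j : ℕ) < d - 1 → a j ≤ 2 * Real.pi * L)
    (S : Set (Fin d → ℝ)) (hSm : MeasurableSet S) (hthick : IsThick γ a S) :
    IsThick (γ / 2 ^ d) (fun j => 2 * a j)
      (⋃ κ ∈ {κ : Fin d → ℝ |
          (∀ j : Fin d, (j : ℕ) < d - 1 → ∃ m : ℤ, κ j = m * (4 * Real.pi * L)) ∧
          (∀ j : Fin d, ¬((j : ℕ) < d - 1) → κ j = 0)},
        (fun x => κ + x) '' SRefl d L S (d - 1)) :=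
  stmt_14_general d L γ hL a ha haL S hSm hthick
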